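/- arXiv:quant-ph/0703225 — 2 statements merged into one kernel-verified Lean document; each statement's English description precedes it below -/
import Mathlib

section
/- Let γ be a strictly positive (positive definite) real 2n×2n matrix whose 2×2 main diagonal blocks are of the form c_k·I₂ (scalar multiples of the 2×2 identity) with c_k ∈ [1,∞) for k = 1,…,n, and let (d_1,…,d_n) be the symplectic eigenvalues of γ. Then Σ_{k=1}^n d_k ≤ Σ_{k=1}^n c_k; that is, the symplectic trace of γ is at most half the trace of γ. -/
open Matrix Finset ComplexOrder

/-- The standard symplectic form on `2n` modes: block diagonal with
`n` blocks `[[0,1],[-1,0]]`. -/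
def OmegaMat (n : ℕ) : Matrix (Fin (2*n)) (Fin (2*n)) ℝ :=
  fun i j =>
    if i.val % 2 = 0 ∧ j.val = i.val + 1 then 1
    else if j.val % 2 = 0 ∧ i.val = j.val + 1 then -1
    else 0

/-- Membership in the real symplectic group `Sp(2n, ℝ)`. -/
def IsSymplectic {n : ℕ} (S : Matrix (Fin (2*n)) (Fin (2*n)) ℝ) : Prop :=
  S * OmegaMat n * S.transpose = OmegaMat n

/-- The Williamson diagonal matrix `diag(d₁,d₁,…,d_n,d_n)`. -/
def sympDiag {n : ℕ} (d : Fin n → ℝ) : Matrix (Fin (2*n)) (Fin (2*n)) ℝ :=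
  Matrix.diagonal (fun i => d ⟨i.val / 2, by have := i.isLt; omega⟩)

/-- `γ` has symplectic eigenvalues `(d₁,…,d_n)`:
there is `S ∈ Sp(2n,ℝ)` with `S γ Sᵀ = diag(d₁,d₁,…,d_n,d_n)`. -/
def HasSympEigenvalues {n : ℕ} (γ : Matrix (Fin (2*n)) (Fin (2*n)) ℝ)
    (d : Fin n → ℝ) : Prop :=
  ∃ S : Matrix (Fin (2*n)) (Fin (2*n)) ℝ,
    IsSymplectic S ∧ S * γ * S.transpose = sympDiag d

/-- Index `2j` in `Fin (2n)` (row/column of the first entry of mode `j`). -/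
def modeIdx1 {n : ℕ} (j : Fin n) : Fin (2*n) :=
  ⟨2 * j.val, by have := j.isLt; omega⟩

/-- Index `2j+1` in `Fin (2n)` (row/column of the second entry of mode `j`). -/
def modeIdx2 {n : ℕ} (j : Fin n) : Fin (2*n) :=
  ⟨2 * j.val + 1, by have := j.isLt; omega⟩

/-- The `j`-th symplectic main diagonal element of `γ`:
the symplectic eigenvalue of the `j`-th `2×2` main diagonal block,
`c_j = (γ_{2j-1,2j-1} γ_{2j,2j} - γ_{2j-1,2j}²)^{1/2}`. -/
noncomputable def sympMainDiag {n : ℕ} (γ : Matrix (Fin (2*n)) (Fin (2*n)) ℝ)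
    (j : Fin n) : ℝ :=
  Real.sqrt (γ (modeIdx1 j) (modeIdx1 j) * γ (modeIdx2 j) (modeIdx2 j)
    - (γ (modeIdx1 j) (modeIdx2 j))^2)

/-- `γ` is a covariance matrix of `n` modes: the complex Hermitian matrix
`γ + iσ` is positive semidefinite. -/
def IsCovarianceMatrix {n : ℕ} (γ : Matrix (Fin (2*n)) (Fin (2*n)) ℝ) : Prop :=
  (γ.map (fun x => (x : ℂ)) + Complex.I • (OmegaMat n).map (fun x => (x : ℂ))).PosSemidef

/-- `γ` is the covariance matrix of a pure Gaussian state of `n` modes: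
`γ = S Sᵀ` for some `S ∈ Sp(2n,ℝ)`. -/
def IsPureCovarianceMatrix {n : ℕ} (γ : Matrix (Fin (2*n)) (Fin (2*n)) ℝ) : Prop :=
  ∃ S : Matrix (Fin (2*n)) (Fin (2*n)) ℝ, IsSymplectic S ∧ γ = S * S.transpose

section Helpers

lemma omega_mul_apply1 {n : ℕ} (A : Matrix (Fin (2*n)) (Fin (2*n)) ℝ) (m : Fin n) (b : Fin (2*n)) :
    (OmegaMat n * A) (modeIdx1 m) b = A (modeIdx2 m) b := by
  rw [Matrix.mul_apply]
  rw [Finset.sum_eq_single (modeIdx2 m)]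
  · have : OmegaMat n (modeIdx1 m) (modeIdx2 m) = 1 := by
      simp [OmegaMat, modeIdx1, modeIdx2, Nat.mul_mod_right]
    rw [this, one_mul]
  · intro q _ hq
    have hqv : q.val ≠ 2 * m.val + 1 := fun h => hq (Fin.ext h)
    have : OmegaMat n (modeIdx1 m) q = 0 := by
      simp only [OmegaMat]
      rw [if_neg, if_neg] <;> simp [modeIdx1, modeIdx2] <;> omega
    rw [this, zero_mul]
  · intro h; exact absurd (Finset.mem_univ _) h

lemma omega_mul_apply2 {n : ℕ} (A : Matrix (Fin (2*n)) (Fin (2*n)) ℝ) (m : Fin n) (b : Fin (2*n)) :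
    (OmegaMat n * A) (modeIdx2 m) b = -A (modeIdx1 m) b := by
  rw [Matrix.mul_apply]
  rw [Finset.sum_eq_single (modeIdx1 m)]
  · have : OmegaMat n (modeIdx2 m) (modeIdx1 m) = -1 := by
      simp only [OmegaMat, modeIdx1, modeIdx2]
      rw [if_neg, if_pos] <;> first | omega | norm_num
    rw [this]; ring
  · intro q _ hq
    have hqv : q.val ≠ 2 * m.val := fun h => hq (Fin.ext h)
    have : OmegaMat n (modeIdx2 m) q = 0 := by
      simp only [OmegaMat]
      rw [if_neg, if_neg] <;> simp [modeIdx1, modeIdx2] <;> omega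
    rw [this, zero_mul]
  · intro h; exact absurd (Finset.mem_univ _) h

lemma mode_cases {n : ℕ} (i : Fin (2*n)) :
    (∃ m : Fin n, i = modeIdx1 m) ∨ (∃ m : Fin n, i = modeIdx2 m) := by
  rcases Nat.even_or_odd i.val with h | h
  · exact Or.inl ⟨⟨i.val / 2, by have := i.isLt; omega⟩, by
      apply Fin.ext; simp [modeIdx1]; obtain ⟨r, hr⟩ := h; omega⟩
  · exact Or.inr ⟨⟨i.val / 2, by have := i.isLt; omega⟩, by
      apply Fin.ext; simp [modeIdx2]; obtain ⟨r, hr⟩ := h; omega⟩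

lemma omega_sq {n : ℕ} : OmegaMat n * OmegaMat n = -1 := by
  ext i j
  rcases mode_cases i with ⟨m, rfl⟩ | ⟨m, rfl⟩
  · rw [omega_mul_apply1]
    simp only [Matrix.neg_apply, Matrix.one_apply]
    by_cases hj : modeIdx1 m = j
    · subst hj
      simp only [OmegaMat, modeIdx1, modeIdx2]
      rw [if_neg, if_pos, if_pos] <;> first | omega | norm_num
    · have hjv : j.val ≠ 2 * m.val := fun h => hj (Fin.ext h.symm)
      rw [if_neg hj]
      simp only [OmegaMat]
      rw [if_neg, if_neg] <;> simp [modeIdx1, modeIdx2] <;> omega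
  · rw [omega_mul_apply2]
    simp only [Matrix.neg_apply, Matrix.one_apply]
    by_cases hj : modeIdx2 m = j
    · subst hj
      simp only [OmegaMat, modeIdx1, modeIdx2]
      rw [if_pos, if_pos] <;> first | omega | norm_num
    · have hjv : j.val ≠ 2 * m.val + 1 := fun h => hj (Fin.ext h.symm)
      rw [if_neg hj]
      simp only [OmegaMat]
      rw [if_neg, if_neg] <;> simp [modeIdx1, modeIdx2] <;> omega

lemma omega_transpose {n : ℕ} : (OmegaMat n)ᵀ = -OmegaMat n := by
  ext i j
  simp only [Matrix.transpose_apply, Matrix.neg_apply, OmegaMat]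
  split_ifs <;> first | (exfalso; omega) | norm_num

lemma sum_mode {n : ℕ} (f : Fin (2*n) → ℝ) :
    ∑ i, f i = ∑ m : Fin n, (f (modeIdx1 m) + f (modeIdx2 m)) := by
  have hbij : Function.Bijective (fun p : Fin n × Fin 2 =>
      (⟨2 * p.1.val + p.2.val, by have := p.1.isLt; have := p.2.isLt; omega⟩ : Fin (2*n))) := by
    constructor
    · rintro ⟨a, r⟩ ⟨a', r'⟩ h
      have := Fin.val_eq_of_eq h
      simp only at this
      have h1 := r.isLt; have h2 := r'.isLt
      ext <;> simp <;> omega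
    · intro i
      refine ⟨⟨⟨i.val / 2, by have := i.isLt; omega⟩, ⟨i.val % 2, by omega⟩⟩, ?_⟩
      apply Fin.ext; simp; omega
  rw [← Fintype.sum_bijective _ hbij _ f (fun p => rfl)]
  rw [Fintype.sum_prod_type]
  refine Finset.sum_congr rfl fun m _ => ?_
  rw [Fin.sum_univ_two]
  rfl

section Main
variable {n : ℕ}

lemma inv_symp (S : Matrix (Fin (2*n)) (Fin (2*n)) ℝ)
    (hS : S * OmegaMat n * Sᵀ = OmegaMat n) :
    S * (-(OmegaMat n * Sᵀ * OmegaMat n)) = 1 := by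
  have : S * (OmegaMat n * Sᵀ * OmegaMat n) = (S * OmegaMat n * Sᵀ) * OmegaMat n := by
    simp only [Matrix.mul_assoc]
  rw [Matrix.mul_neg, this, hS, omega_sq, neg_neg]

lemma symp_transpose_rel (S : Matrix (Fin (2*n)) (Fin (2*n)) ℝ)
    (hS : S * OmegaMat n * Sᵀ = OmegaMat n) :
    Sᵀ * OmegaMat n * S = OmegaMat n := by
  set σ := OmegaMat n
  have h1 : S * (-(σ * Sᵀ * σ)) = 1 := inv_symp S hS
  have h2 : (-(σ * Sᵀ * σ)) * S = 1 := mul_eq_one_comm.mp h1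
  have h3 : σ * (Sᵀ * σ * S) = -1 := by
    rw [Matrix.neg_mul, neg_eq_iff_eq_neg] at h2
    calc σ * (Sᵀ * σ * S) = σ * Sᵀ * σ * S := by simp only [Matrix.mul_assoc]
      _ = -1 := h2
  have h4 : σ * (σ * (Sᵀ * σ * S)) = σ * -1 := by rw [h3]
  have h5 : (σ * σ) * (Sᵀ * σ * S) = σ * -1 := by
    simpa only [Matrix.mul_assoc] using h4
  rw [omega_sq] at h5
  simp only [neg_one_mul, Matrix.mul_neg, Matrix.mul_one, neg_neg] at h5
  simpa using h5
end Main

end Helpers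

/-- **Lemma 1 (Symplectic trace).** If `γ` is a strictly positive real `2n×2n`
matrix whose `2×2` main diagonal blocks are `c_k·I₂` with `c_k ≥ 1`, and
`(d₁,…,d_n)` are its symplectic eigenvalues, then `∑ d_k ≤ ∑ c_k`, i.e. the
symplectic trace of `γ` is at most half the trace of `γ`. -/
theorem symplectic_trace_le (n : ℕ) (γ : Matrix (Fin (2*n)) (Fin (2*n)) ℝ)
    (hγ : γ.PosDef) (c : Fin n → ℝ) (hc : ∀ k, 1 ≤ c k)
    (hblock : ∀ k : Fin n,
      γ (modeIdx1 k) (modeIdx1 k) = c k ∧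
      γ (modeIdx2 k) (modeIdx2 k) = c k ∧
      γ (modeIdx1 k) (modeIdx2 k) = 0 ∧
      γ (modeIdx2 k) (modeIdx1 k) = 0)
    (d : Fin n → ℝ) (hd : HasSympEigenvalues γ d) :
    ∑ k, d k ≤ ∑ k, c k := by

  obtain ⟨S, hS, hSγ⟩ := hd
  have hS' : S * OmegaMat n * Sᵀ = OmegaMat n := hS
  set σ := OmegaMat n with hσdef
  set T : Matrix (Fin (2*n)) (Fin (2*n)) ℝ := -(σ * Sᵀ * σ) with hTdef
  have hST : S * T = 1 := inv_symp S hS'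
  have hTS : T * S = 1 := mul_eq_one_comm.mp hST
  have hSTt : Sᵀ * Tᵀ = 1 := by rw [← Matrix.transpose_mul, hTS, Matrix.transpose_one]
  have hγT : γ = T * sympDiag d * Tᵀ := by
    calc γ = (T * S) * γ * (Sᵀ * Tᵀ) := by rw [hTS, hSTt, Matrix.one_mul, Matrix.mul_one]
    _ = T * (S * γ * Sᵀ) * Tᵀ := by simp only [Matrix.mul_assoc]
    _ = T * sympDiag d * Tᵀ := by rw [hSγ]
  have hTsymp : T * σ * Tᵀ = σ := by
    calc T * σ * Tᵀ = T * (S * σ * Sᵀ) * Tᵀ := by rw [hS']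
    _ = (T * S) * σ * (Sᵀ * Tᵀ) := by simp only [Matrix.mul_assoc]
    _ = σ := by rw [hTS, hSTt, Matrix.one_mul, Matrix.mul_one]
  have hTσT : Tᵀ * σ * T = σ := symp_transpose_rel T hTsymp
  -- diagonal function
  set dd : Fin (2*n) → ℝ := fun q => d ⟨q.val / 2, by have := q.isLt; omega⟩ with hdddef
  have hsd : sympDiag d = Matrix.diagonal dd := rfl
  have hdd1 : ∀ m : Fin n, dd (modeIdx1 m) = d m := by
    intro m; simp only [hdddef]; congr 1; apply Fin.ext
    show (modeIdx1 m).val / 2 = m.val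
    simp only [modeIdx1]; omega
  have hdd2 : ∀ m : Fin n, dd (modeIdx2 m) = d m := by
    intro m; simp only [hdddef]; congr 1; apply Fin.ext
    show (modeIdx2 m).val / 2 = m.val
    simp only [modeIdx2]; omega
  -- nonnegativity of d
  have hDpsd : (sympDiag d).PosSemidef := by
    rw [← hSγ]
    have := hγ.posSemidef.mul_mul_conjTranspose_same S
    simpa [Matrix.conjTranspose_eq_transpose_of_trivial] using this
  have hdnn : ∀ k, 0 ≤ d k := by
    intro k
    have h0 : 0 ≤ sympDiag d (modeIdx1 k) (modeIdx1 k) := by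
      exact hDpsd.diag_nonneg
    rw [hsd, Matrix.diagonal_apply_eq] at h0
    rwa [show dd (modeIdx1 k) = d k from hdd1 k] at h0
  -- diagonal entries of γ
  have hdiag : ∀ a : Fin (2*n), γ a a = ∑ q, dd q * (T a q)^2 := by
    intro a
    conv_lhs => rw [hγT, hsd]
    rw [Matrix.mul_apply]
    refine Finset.sum_congr rfl fun q _ => ?_
    rw [Matrix.transpose_apply, Matrix.mul_diagonal]
    ring
  -- column norms
  set A : Fin n → ℝ := fun k => ∑ i, (T i (modeIdx1 k))^2 with hAdef
  set B : Fin n → ℝ := fun k => ∑ i, (T i (modeIdx2 k))^2 with hBdef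
  -- symplectic identity per mode
  have hk1 : ∀ k : Fin n, ∑ m : Fin n,
      (T (modeIdx1 m) (modeIdx1 k) * T (modeIdx2 m) (modeIdx2 k)
       - T (modeIdx2 m) (modeIdx1 k) * T (modeIdx1 m) (modeIdx2 k)) = 1 := by
    intro k
    have h0 : (Tᵀ * σ * T) (modeIdx1 k) (modeIdx2 k) = 1 := by
      rw [hTσT]
      simp [hσdef, OmegaMat, modeIdx1, modeIdx2, Nat.mul_mod_right]
    calc ∑ m : Fin n, (T (modeIdx1 m) (modeIdx1 k) * T (modeIdx2 m) (modeIdx2 k)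
          - T (modeIdx2 m) (modeIdx1 k) * T (modeIdx1 m) (modeIdx2 k))
        = ∑ m : Fin n, (Tᵀ (modeIdx1 k) (modeIdx1 m) * (σ * T) (modeIdx1 m) (modeIdx2 k)
          + Tᵀ (modeIdx1 k) (modeIdx2 m) * (σ * T) (modeIdx2 m) (modeIdx2 k)) := by
          refine Finset.sum_congr rfl fun m _ => ?_
          rw [omega_mul_apply1, omega_mul_apply2, Matrix.transpose_apply, Matrix.transpose_apply]
          ring
    _ = ∑ p, Tᵀ (modeIdx1 k) p * (σ * T) p (modeIdx2 k) := by
          rw [sum_mode (fun p => Tᵀ (modeIdx1 k) p * (σ * T) p (modeIdx2 k))]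
    _ = (Tᵀ * (σ * T)) (modeIdx1 k) (modeIdx2 k) := by rw [Matrix.mul_apply]
    _ = (Tᵀ * σ * T) (modeIdx1 k) (modeIdx2 k) := by rw [Matrix.mul_assoc]
    _ = 1 := h0
  -- 2 ≤ A k + B k
  have hAB : ∀ k : Fin n, 2 ≤ A k + B k := by
    intro k
    have hle : (1:ℝ) ≤ (A k + B k) / 2 := by
      rw [← hk1 k]
      have step : ∀ m : Fin n,
          T (modeIdx1 m) (modeIdx1 k) * T (modeIdx2 m) (modeIdx2 k)
            - T (modeIdx2 m) (modeIdx1 k) * T (modeIdx1 m) (modeIdx2 k)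
          ≤ ((T (modeIdx1 m) (modeIdx1 k))^2 + (T (modeIdx2 m) (modeIdx1 k))^2
            + (T (modeIdx2 m) (modeIdx2 k))^2 + (T (modeIdx1 m) (modeIdx2 k))^2) / 2 := by
        intro m
        nlinarith [sq_nonneg (T (modeIdx1 m) (modeIdx1 k) - T (modeIdx2 m) (modeIdx2 k)),
          sq_nonneg (T (modeIdx2 m) (modeIdx1 k) + T (modeIdx1 m) (modeIdx2 k))]
      have hsum := Finset.sum_le_sum (fun m (_ : m ∈ Finset.univ) => step m)
      refine le_trans hsum (le_of_eq ?_)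
      rw [hAdef, hBdef]
      simp only
      rw [sum_mode (fun i => (T i (modeIdx1 k))^2), sum_mode (fun i => (T i (modeIdx2 k))^2)]
      rw [← Finset.sum_add_distrib, ← Finset.sum_div]
      refine congrArg (· / 2) (Finset.sum_congr rfl fun m _ => ?_)
      ring
    linarith
  -- trace computation
  have htrace : ∑ k, (c k + c k) = ∑ k, d k * (A k + B k) := by
    calc ∑ k, (c k + c k)
        = ∑ k, (γ (modeIdx1 k) (modeIdx1 k) + γ (modeIdx2 k) (modeIdx2 k)) := by
          refine Finset.sum_congr rfl fun k _ => ?_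
          rw [(hblock k).1, (hblock k).2.1]
    _ = ∑ k, ∑ q, (dd q * (T (modeIdx1 k) q)^2 + dd q * (T (modeIdx2 k) q)^2) := by
          refine Finset.sum_congr rfl fun k _ => ?_
          rw [hdiag, hdiag, ← Finset.sum_add_distrib]
    _ = ∑ q, ∑ k, (dd q * (T (modeIdx1 k) q)^2 + dd q * (T (modeIdx2 k) q)^2) :=
          Finset.sum_comm
    _ = ∑ q, dd q * ∑ i, (T i q)^2 := by
          refine Finset.sum_congr rfl fun q _ => ?_
          rw [sum_mode (fun i => (T i q)^2), Finset.mul_sum]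
          refine Finset.sum_congr rfl fun k _ => ?_
          ring
    _ = ∑ m : Fin n, (dd (modeIdx1 m) * ∑ i, (T i (modeIdx1 m))^2
          + dd (modeIdx2 m) * ∑ i, (T i (modeIdx2 m))^2) := by
          rw [sum_mode (fun q => dd q * ∑ i, (T i q)^2)]
    _ = ∑ k, d k * (A k + B k) := by
          refine Finset.sum_congr rfl fun m _ => ?_
          rw [hdd1, hdd2, hAdef, hBdef]
          simp only
          ring
  have hfin : ∑ k, d k * 2 ≤ ∑ k, d k * (A k + B k) :=
    Finset.sum_le_sum (fun k _ => mul_le_mul_of_nonneg_left (hAB k) (hdnn k))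
  rw [← htrace] at hfin
  have h1 : ∑ k, d k * 2 = 2 * ∑ k, d k := by rw [← Finset.sum_mul]; ring
  have h2 : ∑ k, (c k + c k) = 2 * ∑ k, c k := by rw [Finset.sum_add_distrib]; ring
  rw [h1, h2] at hfin
  linarith
end

section
/- Let γ be a strictly positive (positive definite) real 2n×2n matrix with symplectic eigenvalues (d_1,…,d_n), let γ^{1/2} denote its positive square root, and regard all matrices as complex matrices. Then the complex Hermitian matrix H = i·γ^{1/2} σ γ^{1/2} has eigenvalues exactly d_1, −d_1, d_2, −d_2, …, d_n, −d_n (counted with multiplicity). In particular, the sum of the absolute values of the eigenvalues of H equals 2(d_1 + … + d_n). -/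
open Matrix Finset ComplexOrder

/-- The square root of a positive semidefinite matrix, as `Matrix.PosSemidef.sqrt` was defined
in the older Mathlib (since removed in favour of `CFC.sqrt`). -/
noncomputable def Matrix.PosSemidef.sqrt {m 𝕜 : Type*} [Fintype m] [DecidableEq m] [RCLike 𝕜]
    {A : Matrix m m 𝕜} (hA : A.PosSemidef) : Matrix m m 𝕜 :=
  hA.1.eigenvectorUnitary.1 * diagonal ((↑) ∘ (√·) ∘ hA.1.eigenvalues) *
    (star hA.1.eigenvectorUnitary : Matrix m m 𝕜)

lemma Matrix.PosSemidef.sqrt_mul_self {m 𝕜 : Type*} [Fintype m] [DecidableEq m] [RCLike 𝕜]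
    {A : Matrix m m 𝕜} (hA : A.PosSemidef) : hA.sqrt * hA.sqrt = A := by
  have hU : (star hA.1.eigenvectorUnitary : Matrix m m 𝕜) * hA.1.eigenvectorUnitary.1 = 1 :=
    Unitary.star_mul_self_of_mem hA.1.eigenvectorUnitary.2
  have hD : diagonal (((↑) ∘ (√·) ∘ hA.1.eigenvalues) : m → 𝕜)
      * diagonal ((↑) ∘ (√·) ∘ hA.1.eigenvalues) = diagonal (RCLike.ofReal ∘ hA.1.eigenvalues) := by
    rw [diagonal_mul_diagonal]
    congr 1
    funext i
    simp only [Function.comp_apply]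
    rw [← RCLike.ofReal_mul, Real.mul_self_sqrt (hA.eigenvalues_nonneg i)]
  conv_rhs => rw [hA.1.spectral_theorem]
  rw [Unitary.conjStarAlgAut_apply]
  unfold Matrix.PosSemidef.sqrt
  calc _ = (hA.1.eigenvectorUnitary.1 * (diagonal (((↑) ∘ (√·) ∘ hA.1.eigenvalues) : m → 𝕜)
      * ((star hA.1.eigenvectorUnitary : Matrix m m 𝕜) * hA.1.eigenvectorUnitary.1)
      * diagonal ((↑) ∘ (√·) ∘ hA.1.eigenvalues))) * (star hA.1.eigenvectorUnitary : Matrix m m 𝕜) := by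
        simp only [Matrix.mul_assoc]
    _ = _ := by rw [hU, Matrix.mul_one, hD]

/-! ### Auxiliary lemmas -/

section Aux

open Polynomial

variable {m : Type*} [Fintype m] [DecidableEq m] {R : Type*} [CommRing R]

lemma charpoly_conj_aux (P A Q : Matrix m m R) (hPQ : P * Q = 1) :
    (P * A * Q).charpoly = A.charpoly := by
  have h1 : (C : R →+* R[X]).mapMatrix P * (C : R →+* R[X]).mapMatrix Q = 1 := by
    rw [← _root_.map_mul, hPQ, _root_.map_one]
  have h2 : charmatrix (P * A * Q)
      = (C : R →+* R[X]).mapMatrix P * charmatrix A * (C : R →+* R[X]).mapMatrix Q := by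
    unfold charmatrix
    rw [_root_.map_mul, _root_.map_mul, mul_sub, sub_mul]
    congr 1
    have hc := (Matrix.scalar_commute (X : R[X]) (fun r' => Commute.all _ _)
      ((C : R →+* R[X]).mapMatrix Q)).eq
    rw [mul_assoc, hc, ← mul_assoc, h1, one_mul]
  rw [Matrix.charpoly, Matrix.charpoly, h2, det_mul, det_mul]
  have h3 : ((C : R →+* R[X]).mapMatrix P).det * ((C : R →+* R[X]).mapMatrix Q).det = 1 := by
    rw [← det_mul, h1, det_one]
  calc ((C : R →+* R[X]).mapMatrix P).det * (charmatrix A).det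
        * ((C : R →+* R[X]).mapMatrix Q).det
      = (charmatrix A).det * (((C : R →+* R[X]).mapMatrix P).det
        * ((C : R →+* R[X]).mapMatrix Q).det) := by ring
    _ = (charmatrix A).det := by rw [h3, mul_one]

lemma charpoly_diagonal_aux (v : m → R) :
    (Matrix.diagonal v).charpoly = ∏ i, (X - C (v i)) := by
  have h : charmatrix (Matrix.diagonal v) = Matrix.diagonal (fun i => X - C (v i)) := by
    ext i j
    by_cases h : i = j
    · subst h; simp
    · rw [charmatrix_apply_ne _ _ _ h, Matrix.diagonal_apply_ne _ h,
        Matrix.diagonal_apply_ne _ h, map_zero, neg_zero]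
  rw [Matrix.charpoly, h, det_diagonal]

lemma posdef_conj_aux {A : Matrix m m ℝ} (hA : A.PosDef) (S T : Matrix m m ℝ)
    (hST : S * T = 1) : (S * A * S.transpose).PosDef := by
  have hTS : T * S = 1 := mul_eq_one_comm.mp hST
  rw [posDef_iff_dotProduct_mulVec]
  constructor
  · have hAt : A.transpose = A := hA.1
    show (S * A * S.transpose)ᴴ = _
    rw [conjTranspose_eq_transpose_of_trivial, transpose_mul, transpose_mul,
      transpose_transpose, hAt, mul_assoc]
  · intro x hx
    have hy : S.transpose *ᵥ x ≠ 0 := by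
      intro h
      apply hx
      have : T.transpose *ᵥ (S.transpose *ᵥ x) = x := by
        rw [Matrix.mulVec_mulVec, ← Matrix.transpose_mul, hST, Matrix.transpose_one,
          Matrix.one_mulVec]
      rw [h, Matrix.mulVec_zero] at this
      exact this.symm
    have h2 := hA.dotProduct_mulVec_pos hy
    simp only [star_trivial] at h2 ⊢
    show (0:ℝ) < star x ⬝ᵥ (S * A * S.transpose) *ᵥ x
    rw [show (S * A * S.transpose) *ᵥ x = S *ᵥ (A *ᵥ (S.transpose *ᵥ x)) by
        rw [Matrix.mulVec_mulVec, Matrix.mulVec_mulVec],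
      Matrix.dotProduct_mulVec, ← Matrix.mulVec_transpose]
    simpa using h2

lemma submatrix_equiv_inj {l : Type*} {α : Type*} (e : l ≃ m) {A B : Matrix m m α}
    (h : A.submatrix e e = B.submatrix e e) : A = B := by
  ext i j
  have := congrFun (congrFun h (e.symm i)) (e.symm j)
  simpa using this

/-- The complexification of a real matrix. -/
def cmat {m₁ m₂ : Type*} (M : Matrix m₁ m₂ ℝ) : Matrix m₁ m₂ ℂ :=
  M.map (fun x => (x : ℂ))

lemma cmat_mul (A B : Matrix m m ℝ) : cmat (A * B) = cmat A * cmat B := by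
  unfold cmat
  rw [show (fun x : ℝ => (x : ℂ)) = ⇑Complex.ofRealHom from rfl, Matrix.map_mul]

lemma cmat_one : cmat (1 : Matrix m m ℝ) = 1 :=
  Matrix.map_one _ Complex.ofReal_zero Complex.ofReal_one

end Aux

/-- The interleaving equivalence `Fin 2 × Fin n ≃ Fin (2n)`, `(k, j) ↦ 2j + k`. -/
def eqv (n : ℕ) : Fin 2 × Fin n ≃ Fin (2*n) :=
  (Equiv.prodComm (Fin 2) (Fin n)).trans ((finProdFinEquiv).trans (finCongr (mul_comm n 2)))

lemma eqv_val {n : ℕ} (k : Fin 2) (j : Fin n) :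
    ((eqv n) (k, j)).val = k.val + 2 * j.val := by
  simp [eqv, finProdFinEquiv, mul_comm]

/-- The basic 2×2 symplectic form block. -/
def Jb : Matrix (Fin 2) (Fin 2) ℝ := !![0,1;-1,0]

lemma omega_submatrix (n : ℕ) :
    (OmegaMat n).submatrix (eqv n) (eqv n) = blockDiagonal (fun _ : Fin n => Jb) := by
  ext ⟨k, j⟩ ⟨k', j'⟩
  have h1 := eqv_val k j
  have h2 := eqv_val k' j'
  by_cases hjj : j = j'
  · subst hjj
    fin_cases k <;> fin_cases k' <;>
      simp_all [OmegaMat, Jb, Matrix.submatrix_apply, Matrix.blockDiagonal_apply] <;> omega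
  · have hne : j.val ≠ j'.val := fun h => hjj (Fin.ext h)
    fin_cases k <;> fin_cases k' <;>
      simp_all [OmegaMat, Jb, Matrix.submatrix_apply, Matrix.blockDiagonal_apply] <;>
      first | rfl | omega | (split_ifs <;> first | rfl | omega)

lemma sympDiag_submatrix {n : ℕ} (d : Fin n → ℝ) :
    (sympDiag d).submatrix (eqv n) (eqv n)
      = blockDiagonal (fun j : Fin n => Matrix.diagonal ![d j, d j]) := by
  ext p q
  obtain ⟨k, j⟩ := p
  obtain ⟨k', j'⟩ := q
  have h1 := eqv_val k j
  have h2 := eqv_val k' j'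
  rw [Matrix.submatrix_apply, sympDiag, Matrix.blockDiagonal_apply', Matrix.diagonal_apply]
  split_ifs with ha hb hb
  · have hk : k = k' := by
      have := congrArg Fin.val ha
      rw [h1, h2] at this
      exact Fin.ext (by omega)
    subst hk; subst hb
    rw [Matrix.diagonal_apply_eq]
    have hk2 : ![d j, d j] k = d j := by fin_cases k <;> simp
    rw [hk2]
    have hkl := k.isLt
    congr 1
    apply Fin.ext
    simp only [Fin.val_mk]
    omega
  · exfalso
    apply hb
    have := congrArg Fin.val ha
    rw [h1, h2] at this
    exact Fin.ext (by omega)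
  · subst hb
    rw [Matrix.diagonal_apply_ne]
    intro hkk
    exact ha (by rw [hkk])
  · rfl

noncomputable def Pb : Matrix (Fin 2) (Fin 2) ℂ := !![1, 1; -Complex.I, Complex.I]
noncomputable def Qb : Matrix (Fin 2) (Fin 2) ℂ := !![1/2, Complex.I/2; 1/2, -(Complex.I/2)]

lemma Pb_mul_Qb : Pb * Qb = 1 := by
  ext i j
  fin_cases i <;> fin_cases j <;>
    (simp [Pb, Qb, Matrix.mul_apply, Fin.sum_univ_two, Matrix.one_apply];
     try field_simp;
     try ring_nf;
     try simp [Complex.I_sq];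
     try ring)

lemma diag2C (x y : ℂ) : Matrix.diagonal ![x, y] = !![x, 0; 0, y] := by
  ext i j
  fin_cases i <;> fin_cases j <;> simp [Matrix.diagonal_apply]

lemma diag2R (x y : ℝ) : Matrix.diagonal ![x, y] = !![x, 0; 0, y] := by
  ext i j
  fin_cases i <;> fin_cases j <;> simp [Matrix.diagonal_apply]

lemma map2 (M : Matrix (Fin 2) (Fin 2) ℝ) :
    M.map (fun x => (x : ℂ)) = !![(M 0 0 : ℂ), M 0 1; M 1 0, M 1 1] := by
  ext i j
  fin_cases i <;> fin_cases j <;> simp [Matrix.map_apply]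

lemma block_eig (a : ℝ) :
    Complex.I • ((Matrix.diagonal ![a, a]).map (fun x => (x : ℂ)) * Jb.map (fun x => (x : ℂ)))
      = Pb * Matrix.diagonal ![(a : ℂ), -(a : ℂ)] * Qb := by
  rw [diag2R, map2, map2, diag2C]
  ext i j
  fin_cases i <;> fin_cases j <;>
    (simp [Pb, Qb, Jb, Matrix.mul_apply, Fin.sum_univ_two];
     try field_simp;
     try ring_nf;
     try simp [Complex.I_sq];
     try ring)

lemma Jb_mul_Jb : Jb * Jb = -1 := by
  ext i j
  fin_cases i <;> fin_cases j <;>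
    simp [Jb, Matrix.mul_apply, Fin.sum_univ_two, Matrix.one_apply]

/-- If `γ` is positive definite with symplectic eigenvalues `(d₁,…,d_n)`, then
the complex Hermitian matrix `H = i·γ^{1/2} σ γ^{1/2}` has eigenvalues exactly
`d₁, -d₁, …, d_n, -d_n` counted with multiplicity (stated via the multiset of
roots of its characteristic polynomial); in particular the sum of the absolute
values of the eigenvalues of `H` is `2(d₁ + … + d_n)`. -/
theorem eigenvalues_of_sqrt_sigma_sqrt (n : ℕ)
    (γ : Matrix (Fin (2*n)) (Fin (2*n)) ℝ) (hγ : γ.PosDef)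
    (d : Fin n → ℝ) (hd : HasSympEigenvalues γ d)
    (H : Matrix (Fin (2*n)) (Fin (2*n)) ℂ)
    (hH : H = Complex.I •
      ((hγ.posSemidef.sqrt).map (fun x => (x : ℂ)) *
        (OmegaMat n).map (fun x => (x : ℂ)) *
        (hγ.posSemidef.sqrt).map (fun x => (x : ℂ)))) :
    H.charpoly.roots
        = (Finset.univ.val.bind fun j : Fin n => {(d j : ℂ), -(d j : ℂ)}) ∧
      (H.charpoly.roots.map fun z => ‖z‖).sum = 2 * ∑ j, d j := by
  classical
  obtain ⟨S, hS, hSD⟩ := hd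
  have hS' : S * OmegaMat n * S.transpose = OmegaMat n := hS
  set Ω : Matrix (Fin (2*n)) (Fin (2*n)) ℝ := OmegaMat n with hΩdef
  set D : Matrix (Fin (2*n)) (Fin (2*n)) ℝ := sympDiag d with hDdef
  set R : Matrix (Fin (2*n)) (Fin (2*n)) ℝ := hγ.posSemidef.sqrt with hRdef
  have hRR : R * R = γ := hγ.posSemidef.sqrt_mul_self
  have hdetR : IsUnit R.det := by
    have hmul : R.det * R.det = γ.det := by rw [← Matrix.det_mul, hRR]
    rw [isUnit_iff_ne_zero]
    intro h
    have hpos := hγ.det_pos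
    rw [← hmul, h, mul_zero] at hpos
    exact lt_irrefl _ hpos
  have hRinv : R * R⁻¹ = 1 := Matrix.mul_nonsing_inv _ hdetR
  -- Ω² = -1
  have hOO : Ω * Ω = -1 := by
    apply submatrix_equiv_inj (eqv n)
    rw [← Matrix.submatrix_mul_equiv Ω Ω (eqv n) (eqv n) (eqv n), omega_submatrix,
      ← Matrix.blockDiagonal_mul,
      show (fun _ : Fin n => Jb * Jb) = (fun _ : Fin n => -(1 : Matrix (Fin 2) (Fin 2) ℝ))
        from funext fun _ => Jb_mul_Jb]
    have hbd : blockDiagonal (fun _ : Fin n => -(1 : Matrix (Fin 2) (Fin 2) ℝ)) = -1 := by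
      have := Matrix.blockDiagonal_neg (fun _ : Fin n => (1 : Matrix (Fin 2) (Fin 2) ℝ))
      rw [show (fun _ : Fin n => -(1 : Matrix (Fin 2) (Fin 2) ℝ))
          = -(fun _ : Fin n => (1 : Matrix (Fin 2) (Fin 2) ℝ)) from rfl, this,
        show blockDiagonal (fun _ : Fin n => (1 : Matrix (Fin 2) (Fin 2) ℝ)) = 1
          from Matrix.blockDiagonal_one]
    rw [hbd]
    ext p q
    simp [Matrix.submatrix_apply, Matrix.one_apply, Equiv.apply_eq_iff_eq]
  set T : Matrix (Fin (2*n)) (Fin (2*n)) ℝ := -(Ω * S.transpose * Ω) with hTdef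
  have hST : S * T = 1 := by
    rw [hTdef, mul_neg,
      show S * (Ω * S.transpose * Ω) = (S * Ω * S.transpose) * Ω from by noncomm_ring,
      hS', hOO, neg_neg]
  -- positivity of the d j
  have hDpd : D.PosDef := by
    rw [← hSD]
    exact posdef_conj_aux hγ S T hST
  have hdpos : ∀ j, 0 < d j := by
    intro j
    have h0 : (Matrix.diagonal
        (fun i : Fin (2*n) => d ⟨i.val / 2, by have := i.isLt; omega⟩)).PosDef := hDpd
    have h1 := Matrix.posDef_diagonal_iff.mp h0 ⟨2*j.val, by have := j.isLt; omega⟩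
    refine lt_of_lt_of_eq h1 (congrArg d (Fin.ext ?_))
    simp only [Fin.val_mk]
    omega
  -- complexified inverses
  have hST_c : cmat S * cmat T = 1 := by rw [← cmat_mul, hST, cmat_one]
  have hRinv_c : cmat R * cmat R⁻¹ = 1 := by rw [← cmat_mul, hRinv, cmat_one]
  -- Step A: conjugate by sqrt
  have cp1 : H.charpoly = (Complex.I • (cmat γ * cmat Ω)).charpoly := by
    have hA : cmat R * H * cmat R⁻¹ = Complex.I • (cmat γ * cmat Ω) := by
      rw [hH]
      show cmat R * (Complex.I • (cmat R * cmat Ω * cmat R)) * cmat R⁻¹ = _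
      rw [Matrix.mul_smul, Matrix.smul_mul]
      refine congrArg (Complex.I • ·) ?_
      calc cmat R * (cmat R * cmat Ω * cmat R) * cmat R⁻¹
          = cmat (R * (R * Ω * R) * R⁻¹) := by rw [cmat_mul, cmat_mul, cmat_mul, cmat_mul]
        _ = cmat (γ * Ω) := by
            congr 1
            rw [show R * (R * Ω * R) * R⁻¹ = (R * R) * Ω * (R * R⁻¹) from by noncomm_ring,
              hRR, hRinv, mul_one]
        _ = cmat γ * cmat Ω := cmat_mul _ _
    rw [← charpoly_conj_aux (cmat R) H (cmat R⁻¹) hRinv_c, hA]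
  -- Step B: conjugate by S
  have cp2 : (Complex.I • (cmat γ * cmat Ω)).charpoly
      = (Complex.I • (cmat D * cmat Ω)).charpoly := by
    have hB : cmat S * (Complex.I • (cmat γ * cmat Ω)) * cmat T
        = Complex.I • (cmat D * cmat Ω) := by
      rw [Matrix.mul_smul, Matrix.smul_mul]
      congr 1
      calc cmat S * (cmat γ * cmat Ω) * cmat T
          = cmat (S * (γ * Ω) * T) := by rw [cmat_mul, cmat_mul, cmat_mul]
        _ = cmat (D * Ω) := by
            refine congrArg cmat ?_
            have hΩT : Ω * T = S.transpose * Ω := by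
              rw [hTdef, mul_neg,
                show Ω * (Ω * S.transpose * Ω) = (Ω * Ω) * (S.transpose * Ω) from by
                  noncomm_ring,
                hOO, neg_mul, one_mul, neg_neg]
            calc S * (γ * Ω) * T = (S * γ) * (Ω * T) := by noncomm_ring
              _ = (S * γ) * (S.transpose * Ω) := by rw [hΩT]
              _ = (S * γ * S.transpose) * Ω := by noncomm_ring
              _ = D * Ω := by rw [hSD]
        _ = cmat D * cmat Ω := cmat_mul _ _
    rw [← charpoly_conj_aux (cmat S) _ (cmat T) hST_c, hB]
  -- Step C: block diagonalization
  have cp3 : (Complex.I • (cmat D * cmat Ω)).charpoly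
      = (Matrix.diagonal (fun p : Fin 2 × Fin n =>
          ![(d p.2 : ℂ), -(d p.2 : ℂ)] p.1)).charpoly := by
    have e1 : (cmat D * cmat Ω).submatrix (eqv n) (eqv n)
        = (cmat D).submatrix (eqv n) (eqv n) * (cmat Ω).submatrix (eqv n) (eqv n) :=
      (Matrix.submatrix_mul_equiv _ _ _ _ _).symm
    have e2 : (cmat D).submatrix (eqv n) (eqv n)
        = blockDiagonal (fun j => (Matrix.diagonal ![d j, d j]).map (fun x => (x : ℂ))) := by
      show (D.map _).submatrix _ _ = _
      rw [Matrix.submatrix_map, hDdef, sympDiag_submatrix,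
        Matrix.blockDiagonal_map _ _ Complex.ofReal_zero]
    have e3 : (cmat Ω).submatrix (eqv n) (eqv n)
        = blockDiagonal (fun _ : Fin n => Jb.map (fun x => (x : ℂ))) := by
      show (Ω.map _).submatrix _ _ = _
      rw [Matrix.submatrix_map, hΩdef, omega_submatrix,
        Matrix.blockDiagonal_map _ _ Complex.ofReal_zero]
    have hsub : (Complex.I • (cmat D * cmat Ω)).submatrix (eqv n) (eqv n)
        = blockDiagonal (fun j : Fin n => Pb * Matrix.diagonal ![(d j : ℂ), -(d j : ℂ)] * Qb) := by
      have hsmul : (Complex.I • (cmat D * cmat Ω)).submatrix (eqv n) (eqv n)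
          = Complex.I • ((cmat D * cmat Ω).submatrix (eqv n) (eqv n)) := by
        ext p q
        simp [Matrix.submatrix_apply]
      rw [hsmul, e1, e2, e3, ← Matrix.blockDiagonal_mul, ← Matrix.blockDiagonal_smul]
      refine congrArg Matrix.blockDiagonal (funext fun j => ?_)
      exact block_eig (d j)
    have h4 : (Complex.I • (cmat D * cmat Ω)).charpoly
        = (blockDiagonal (fun j : Fin n => Pb * Matrix.diagonal ![(d j : ℂ), -(d j : ℂ)] * Qb)).charpoly := by
      rw [← hsub]
      have hre : (Complex.I • (cmat D * cmat Ω)).submatrix (eqv n) (eqv n)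
          = (Matrix.reindex (eqv n).symm (eqv n).symm) (Complex.I • (cmat D * cmat Ω)) := by
        rw [Matrix.reindex_apply]
        simp
      rw [hre, Matrix.charpoly_reindex]
    rw [h4]
    have e5 : blockDiagonal (fun j : Fin n => Pb * Matrix.diagonal ![(d j : ℂ), -(d j : ℂ)] * Qb)
        = blockDiagonal (fun _ : Fin n => Pb)
          * blockDiagonal (fun j : Fin n => Matrix.diagonal ![(d j : ℂ), -(d j : ℂ)])
          * blockDiagonal (fun _ : Fin n => Qb) := by
      rw [← Matrix.blockDiagonal_mul, ← Matrix.blockDiagonal_mul]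
    have e6 : blockDiagonal (fun _ : Fin n => Pb) * blockDiagonal (fun _ : Fin n => Qb) = 1 := by
      rw [← Matrix.blockDiagonal_mul,
        show (fun _ : Fin n => Pb * Qb) = (fun _ : Fin n => (1 : Matrix (Fin 2) (Fin 2) ℂ))
          from funext fun _ => Pb_mul_Qb]
      exact Matrix.blockDiagonal_one
    rw [e5, charpoly_conj_aux _ _ _ e6, Matrix.blockDiagonal_diagonal]
  -- roots
  have hcp : H.charpoly = ∏ p : Fin 2 × Fin n,
      (Polynomial.X - Polynomial.C (![(d p.2 : ℂ), -(d p.2 : ℂ)] p.1)) := by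
    rw [cp1, cp2, cp3, charpoly_diagonal_aux]
  have hmonic : (∏ p : Fin 2 × Fin n,
      (Polynomial.X - Polynomial.C (![(d p.2 : ℂ), -(d p.2 : ℂ)] p.1))) ≠ 0 :=
    (Polynomial.monic_prod_of_monic _ _ (fun p _ => Polynomial.monic_X_sub_C _)).ne_zero
  have hroots : H.charpoly.roots
      = Finset.univ.val.map (fun p : Fin 2 × Fin n => ![(d p.2 : ℂ), -(d p.2 : ℂ)] p.1) := by
    rw [hcp, Polynomial.roots_prod _ _ hmonic]
    simp only [Polynomial.roots_X_sub_C, Multiset.bind_singleton]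
  have hms : Finset.univ.val.map (fun p : Fin 2 × Fin n => ![(d p.2 : ℂ), -(d p.2 : ℂ)] p.1)
      = (Finset.univ.val.bind fun j : Fin n => {(d j : ℂ), -(d j : ℂ)}) := by
    rw [← Finset.univ_product_univ, Finset.product_val]
    show Multiset.map _ ((Finset.univ.val : Multiset (Fin 2)).bind
      fun k => (Finset.univ.val : Multiset (Fin n)).map (Prod.mk k)) = _
    rw [Multiset.map_bind]
    have huniv2 : (Finset.univ.val : Multiset (Fin 2)) = (0 : Fin 2) ::ₘ (1 : Fin 2) ::ₘ 0 := by
      decide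
    rw [huniv2, Multiset.cons_bind, Multiset.cons_bind, Multiset.zero_bind, add_zero]
    have hrhs : (Finset.univ.val.bind fun j : Fin n => ({(d j : ℂ), -(d j : ℂ)} : Multiset ℂ))
        = Multiset.map (fun j : Fin n => (d j : ℂ)) Finset.univ.val
          + Finset.univ.val.bind (fun j : Fin n => ({-(d j : ℂ)} : Multiset ℂ)) :=
      Multiset.bind_cons _ _ _
    rw [hrhs, Multiset.bind_singleton]
    congr 1
    · rw [Multiset.map_map]
      exact Multiset.map_congr rfl (fun x _ => by simp)
    · rw [Multiset.map_map]
      exact Multiset.map_congr rfl (fun x _ => by simp)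
  constructor
  · rw [hroots, hms]
  · rw [hroots, hms, Multiset.map_bind, Multiset.sum_bind]
    have hpt : ∀ j : Fin n,
        (Multiset.map (fun z => ‖z‖) ({(d j : ℂ), -(d j : ℂ)} : Multiset ℂ)).sum
          = 2 * d j := by
      intro j
      simp only [Multiset.insert_eq_cons, Multiset.map_cons, Multiset.map_singleton,
        Multiset.sum_cons, Multiset.sum_singleton, norm_neg, Complex.norm_real, Real.norm_eq_abs]
      rw [abs_of_pos (hdpos j)]
      ring
    rw [show (fun j : Fin n => (Multiset.map (fun z => ‖z‖)
        ({(d j : ℂ), -(d j : ℂ)} : Multiset ℂ)).sum) = (fun j : Fin n => 2 * d j)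
      from funext hpt]
    rw [← Finset.sum_eq_multiset_sum, ← Finset.mul_sum]
end
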